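/- arXiv:math/0306253 — 8 statements merged into one kernel-verified Lean document; each statement's English description precedes it below -/
import Mathlib

section
/- Let σ be a finite type with Fintype.card σ = t, let n be a natural number with n > t, and let i : Fin n → ℕ be any function. Then the composite Q_{i 0} ∘ Q_{i 1} ∘ ⋯ ∘ Q_{i (n-1)} of Milnor derivations is the zero linear endomorphism of MvPolynomial σ (ZMod 2). (This is the key step in the paper's Lemma 2: any product of n Milnor derivations annihilates 𝔽₂[x₁, …, x_t] as soon as t ≤ n − 1.) -/
/-!
In characteristic 2 a derivation kills squares, so on a monomial `x^d` it only acts on the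
square-free part `∏_{d_j odd} x_j`. If moreover it sends every variable to a polynomial with
even exponents, such as `Q_i x_j = x_j^(2^(i+1))`, each term of `D (x^d)` has strictly fewer odd
exponents than `x^d`. With `t` variables a monomial has at most `t` odd exponents, so `t + 1`
such derivations in a row annihilate everything.
-/

open MvPolynomial

noncomputable def Q (σ : Type*) (i : ℕ) :
    MvPolynomial σ (ZMod 2) →ₗ[ZMod 2] MvPolynomial σ (ZMod 2) :=
  (MvPolynomial.mkDerivation (ZMod 2)
    fun j => (MvPolynomial.X j : MvPolynomial σ (ZMod 2)) ^ (2 ^ (i + 1))).toLinearMap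

theorem List.foldr_comp_apply_mem {K M : Type*} [Semiring K] [AddCommMonoid M] [Module K M]
    (F : ℕ → Submodule K M) (L : List (M →ₗ[K] M))
    (hL : ∀ f ∈ L, ∀ k, ∀ p ∈ F (k + 1), f p ∈ F k) (k : ℕ) {p : M}
    (hp : p ∈ F (k + L.length)) : L.foldr (· ∘ₗ ·) LinearMap.id p ∈ F k := by
  induction L generalizing k with
  | nil => simpa using hp
  | cons f L ih =>
    have hL' : ∀ g ∈ L, ∀ k, ∀ p ∈ F (k + 1), g p ∈ F k :=
      fun g hg => hL g (List.mem_cons_of_mem f hg)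
    refine hL f List.mem_cons_self k _ (ih hL' (k + 1) ?_)
    rwa [List.length_cons, ← add_assoc, add_right_comm] at hp

namespace MvPolynomial

variable {σ : Type*}

noncomputable def exponentParity : (σ →₀ ℕ) →+ (σ →₀ ZMod 2) :=
  Finsupp.mapRange.addMonoidHom (Nat.castAddMonoidHom (ZMod 2))

@[simp]
theorem exponentParity_apply (d : σ →₀ ℕ) (j : σ) :
    exponentParity d j = (d j : ZMod 2) := rfl

theorem exponentParity_single_of_even (j : σ) {m : ℕ} (hm : Even m) :
    exponentParity (Finsupp.single j m) = 0 := by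
  rw [exponentParity, Finsupp.mapRange.addMonoidHom_apply, Finsupp.mapRange_single,
    Nat.coe_castAddMonoidHom, ZMod.natCast_eq_zero_iff_even.mpr hm, Finsupp.single_zero]

noncomputable def oddCount (d : σ →₀ ℕ) : ℕ := (exponentParity d).support.card

theorem oddCount_le_card [Fintype σ] (d : σ →₀ ℕ) : oddCount d ≤ Fintype.card σ :=
  Finset.card_le_univ _

theorem oddCount_add_of_exponentParity_eq_zero {d e : σ →₀ ℕ} (he : exponentParity e = 0) :
    oddCount (d + e) = oddCount d := by
  rw [oddCount, map_add, he, add_zero, oddCount]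

theorem oddCount_sub_single_add_one {d : σ →₀ ℕ} {j : σ} (hj : Odd (d j)) :
    oddCount (d - Finsupp.single j 1) + 1 = oddCount d := by
  classical
  have hle : Finsupp.single j 1 ≤ d := Finsupp.single_le_iff.mpr hj.pos
  have hpar : exponentParity d = exponentParity (d - Finsupp.single j 1) + Finsupp.single j 1 := by
    conv_lhs => rw [← tsub_add_cancel_of_le hle]
    rw [map_add]
    congr 1
    ext x
    simp [Finsupp.single_apply]
  have hj_notMem : j ∉ (exponentParity (d - Finsupp.single j 1)).support := by
    rw [Finsupp.notMem_support_iff, exponentParity_apply, Finsupp.tsub_apply,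
      Finsupp.single_eq_same, ZMod.natCast_eq_zero_iff_even]
    exact Nat.Odd.sub_odd hj odd_one
  rw [oddCount, oddCount, hpar, Finsupp.support_add_single hj_notMem one_ne_zero, Finset.card_cons]

theorem oddCount_eq_zero_iff {d : σ →₀ ℕ} : oddCount d = 0 ↔ exponentParity d = 0 :=
  Finset.card_eq_zero.trans Finsupp.support_eq_empty

variable (R : Type*) [CommSemiring R]

/-- Polynomials all of whose monomials have fewer than `k` odd exponents; strictness makes
level `0` the zero submodule. -/
noncomputable def oddFiltration (k : ℕ) : Submodule R (MvPolynomial σ R) :=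
  restrictSupport R {d | oddCount d < k}

variable {R}

theorem oddFiltration_zero : oddFiltration R 0 = (⊥ : Submodule R (MvPolynomial σ R)) := by
  simp [oddFiltration, restrictSupport_eq_span]

theorem mem_oddFiltration_of_card_lt [Fintype σ] {k : ℕ} (hk : Fintype.card σ < k)
    (p : MvPolynomial σ R) : p ∈ oddFiltration R k := fun d _ =>
  (oddCount_le_card d).trans_lt hk

theorem mul_mem_oddFiltration {k : ℕ} {p q : MvPolynomial σ R} (hp : p ∈ oddFiltration R k)
    (hq : q ∈ oddFiltration R 1) : p * q ∈ oddFiltration R k := by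
  classical
  intro d hd
  obtain ⟨a, ha, b, hb, rfl⟩ := Finset.mem_add.mp (support_mul p q hd)
  have hb : exponentParity b = 0 := oddCount_eq_zero_iff.mp (Nat.lt_one_iff.mp (hq hb))
  exact (oddCount_add_of_exponentParity_eq_zero hb).trans_lt (hp ha)

theorem derivation_apply_mem_oddFiltration [CharP R 2]
    (D : Derivation R (MvPolynomial σ R) (MvPolynomial σ R))
    (hD : ∀ j, D (X j) ∈ oddFiltration R 1) {k : ℕ} {p : MvPolynomial σ R}
    (hp : p ∈ oddFiltration R (k + 1)) : D p ∈ oddFiltration R k := by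
  have hD' : D = mkDerivation R fun j => D (X j) :=
    derivation_ext fun j => (mkDerivation_X R (fun j => D (X j)) j).symm
  have hmonomial (d : σ →₀ ℕ) (hd : oddCount d < k + 1) :
      D (monomial d 1) ∈ oddFiltration R k := by
    rw [hD', mkDerivation_monomial, one_smul]
    refine Submodule.finsuppSum_mem _ _ _ _ fun j _ => mul_mem_oddFiltration ?_ (hD j)
    rw [oddFiltration, monomial_mem_restrictSupport]
    rcases Nat.even_or_odd (d j) with heven | hodd
    · exact Or.inr ((CharP.cast_eq_zero_iff R 2 _).mpr heven.two_dvd)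
    · left
      show oddCount _ < k
      have := oddCount_sub_single_add_one hodd
      omega
  suffices oddFiltration R (k + 1) ≤ (oddFiltration R k).comap D.toLinearMap from this hp
  rw [oddFiltration, restrictSupport_eq_span, Submodule.span_le]
  rintro _ ⟨d, hd, rfl⟩
  exact hmonomial d hd

end MvPolynomial

theorem Q_apply_mem_oddFiltration {σ : Type*} (i : ℕ) {k : ℕ} {p : MvPolynomial σ (ZMod 2)}
    (hp : p ∈ oddFiltration (ZMod 2) (k + 1)) : Q σ i p ∈ oddFiltration (ZMod 2) k := by
  refine derivation_apply_mem_oddFiltration _ (fun j => ?_) hp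
  rw [mkDerivation_X, X_pow_eq_monomial, oddFiltration, monomial_mem_restrictSupport]
  left
  show oddCount _ < 1
  rw [Nat.lt_one_iff, oddCount_eq_zero_iff]
  exact exponentParity_single_of_even j (Nat.even_pow.mpr ⟨even_two, i.succ_ne_zero⟩)

/-- Any composite of `n` Milnor derivations is zero on a polynomial ring in
`t < n` variables. -/
theorem composite_milnor_derivations_eq_zero
    (σ : Type*) [Fintype σ] (t : ℕ) (ht : Fintype.card σ = t)
    (n : ℕ) (hn : n > t) (i : Fin n → ℕ) :
    (List.ofFn fun k : Fin n => Q σ (i k)).foldr (· ∘ₗ ·) LinearMap.id = 0 := by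
  refine LinearMap.ext fun p => ?_
  have hQ : ∀ f ∈ List.ofFn (fun k : Fin n => Q σ (i k)),
      ∀ k, ∀ p ∈ oddFiltration (ZMod 2) (k + 1), f p ∈ oddFiltration (ZMod 2) k := by
    simp only [List.mem_ofFn]
    rintro _ ⟨m, rfl⟩ k p hp
    exact Q_apply_mem_oddFiltration (i m) hp
  have hp : p ∈ oddFiltration (ZMod 2) (0 + (List.ofFn fun k : Fin n => Q σ (i k)).length) :=
    mem_oddFiltration_of_card_lt (by rw [List.length_ofFn]; omega) p
  simpa [oddFiltration_zero] using List.foldr_comp_apply_mem _ _ hQ 0 hp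
end

section
/- For every n ≥ 1, in MvPolynomial (Fin n) (ZMod 2) one has (Q_0 ∘ Q_1 ∘ ⋯ ∘ Q_{n-1}) (∏_{j : Fin n} X j) = ((Q_0 ∘ Q_1 ∘ ⋯ ∘ Q_{n-2}) (∏_{j : Fin n} X j))^2, where the second composite has n − 1 factors (and is the identity when n = 1). (This realizes the identity Sq₀(Q₀⋯Q_{n−2} ι_n) = Q₀⋯Q_{n−1} ι_n from the paper's Lemma 2 in the polynomial model ι_n ↦ x₁⋯x_n.) -/
open MvPolynomial

open Finset

variable {σ : Type*} {i : ℕ}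

lemma Q_apply (p : MvPolynomial σ (ZMod 2)) :
    Q σ i p = (MvPolynomial.mkDerivation (ZMod 2)
      fun j => (MvPolynomial.X j : MvPolynomial σ (ZMod 2)) ^ (2 ^ (i + 1))) p := rfl

lemma Q_X (j : σ) : Q σ i (X j) = X j ^ 2 ^ (i + 1) := by
  rw [Q_apply, mkDerivation_X]

lemma Q_mul (p q : MvPolynomial σ (ZMod 2)) :
    Q σ i (p * q) = p * Q σ i q + q * Q σ i p := by
  rw [Q_apply, Derivation.leibniz]; rfl

lemma Q_sq (p : MvPolynomial σ (ZMod 2)) : Q σ i (p * p) = 0 := by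
  rw [Q_mul, CharTwo.add_self_eq_zero]

lemma Q_even_pow (j : σ) {e : ℕ} (he : Even e) : Q σ i (X j ^ e) = 0 := by
  obtain ⟨r, rfl⟩ := he
  rw [← two_mul, mul_comm, pow_mul, sq, Q_sq]

lemma Q_prod {τ : Type*} [DecidableEq τ] (s : Finset τ) (g : τ → MvPolynomial σ (ZMod 2)) :
    Q σ i (∏ j ∈ s, g j) = ∑ j ∈ s, (∏ l ∈ s.erase j, g l) * Q σ i (g j) := by
  classical
  induction s using Finset.induction with
  | empty => simp [Q_apply]
  | @insert a s ha ih =>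
    rw [Finset.prod_insert ha, Q_mul, ih, Finset.sum_insert ha, Finset.mul_sum,
      Finset.erase_insert ha, add_comm]
    congr 1
    refine Finset.sum_congr rfl fun j hj => ?_
    rw [Finset.erase_insert_of_ne (by rintro rfl; exact ha hj),
      Finset.prod_insert (fun h => ha (Finset.mem_of_mem_erase h))]
    ring

noncomputable def term (n : ℕ) {k : ℕ} (c : Fin k → ℕ) (f : Fin k ↪ Fin n) :
    MvPolynomial (Fin n) (ZMod 2) :=
  (∏ t, X (f t) ^ 2 ^ (c t + 1)) * ∏ j ∈ univ \ univ.image ⇑f, X j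

lemma even_pow_succ (m : ℕ) : Even (2 ^ (m + 1)) := ⟨2 ^ m, by rw [pow_succ, mul_two]⟩

lemma Q_term (n : ℕ) {k : ℕ} (i : ℕ) (c : Fin k → ℕ) (f : Fin k ↪ Fin n) :
    Q (Fin n) i (term n c f) =
      ∑ j ∈ univ \ univ.image ⇑f,
        X j ^ 2 ^ (i + 1) * (∏ t, X (f t) ^ 2 ^ (c t + 1)) *
          ∏ l ∈ (univ \ univ.image ⇑f).erase j, X l := by
  have hA : Q (Fin n) i (∏ t, X (f t) ^ 2 ^ (c t + 1)) = 0 := by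
    rw [Q_prod]
    refine Finset.sum_eq_zero fun t _ => ?_
    rw [Q_even_pow _ (even_pow_succ _), mul_zero]
  rw [term, Q_mul, hA, mul_zero, add_zero, Q_prod, Finset.mul_sum]
  refine Finset.sum_congr rfl fun j hj => ?_
  rw [Q_X]
  ring

noncomputable def consEmb {n k : ℕ} (j : Fin n) (f : Fin k ↪ Fin n) (hj : j ∉ Set.range ⇑f) :
    Fin (k + 1) ↪ Fin n :=
  ⟨Fin.cons j ⇑f, Fin.cons_injective_of_injective hj f.injective⟩

lemma coe_consEmb {n k : ℕ} (j : Fin n) (f : Fin k ↪ Fin n) (hj : j ∉ Set.range ⇑f) :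
    ⇑(consEmb j f hj) = Fin.cons j ⇑f := rfl

lemma compl_consEmb {n k : ℕ} (j : Fin n) (f : Fin k ↪ Fin n) (hj : j ∉ Set.range ⇑f) :
    univ \ univ.image ⇑(consEmb j f hj) = (univ \ univ.image ⇑f).erase j := by
  ext x
  simp only [coe_consEmb, Finset.mem_sdiff, Finset.mem_univ, true_and, Finset.mem_image,
    Finset.mem_erase, not_exists]
  constructor
  · intro h
    refine ⟨fun hx => h 0 (by simp [hx]), fun t ht => h t.succ (by simp [ht])⟩
  · rintro ⟨h1, h2⟩ t ht
    rcases Fin.eq_zero_or_eq_succ t with rfl | ⟨s, rfl⟩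
    · exact h1 (by simpa using ht.symm)
    · exact h2 s (by simpa using ht)

lemma term_consEmb (n : ℕ) {k : ℕ} (c : Fin (k + 1) → ℕ) (j : Fin n) (f : Fin k ↪ Fin n)
    (hj : j ∉ Set.range ⇑f) :
    term n c (consEmb j f hj) =
      X j ^ 2 ^ (c 0 + 1) * (∏ t, X (f t) ^ 2 ^ (c t.succ + 1)) *
        ∏ l ∈ (univ \ univ.image ⇑f).erase j, X l := by
  rw [term, compl_consEmb, Fin.prod_univ_succ]
  simp only [coe_consEmb, Fin.cons_zero, Fin.cons_succ]

lemma key (n k : ℕ) (c : Fin k → ℕ) :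
    ((List.ofFn fun t => Q (Fin n) (c t)).foldr (· ∘ₗ ·) LinearMap.id) (∏ j : Fin n, X j) =
      ∑ f : Fin k ↪ Fin n, term n c f := by
  induction k with
  | zero =>
    rw [List.ofFn_zero, List.foldr_nil, Fintype.sum_unique]
    simp [term, LinearMap.id_apply]
  | succ k ih =>
    rw [List.ofFn_succ, List.foldr_cons, LinearMap.comp_apply, ih (fun t => c t.succ)]
    rw [map_sum]
    simp_rw [Q_term n (c 0) (fun t => c t.succ)]
    rw [Finset.sum_sigma']
    refine Finset.sum_bij (fun p hp => consEmb p.2 p.1 ?_) ?_ ?_ ?_ ?_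
    · intro hr
      obtain ⟨t, ht⟩ := hr
      have := (Finset.mem_sigma.mp hp).2
      rw [Finset.mem_sdiff, Finset.mem_image] at this
      exact this.2 ⟨t, Finset.mem_univ t, ht⟩
    · intro p hp; exact Finset.mem_univ _
    · rintro ⟨f, j⟩ hp ⟨f', j'⟩ hp' h
      have hc : (Fin.cons j ⇑f : Fin (k+1) → Fin n) = Fin.cons j' ⇑f' := by exact congrArg DFunLike.coe h
      obtain ⟨h1, h2⟩ := Fin.cons_injective2 hc
      obtain rfl := DFunLike.coe_injective h2
      obtain rfl := h1
      rfl
    · intro f' _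
      have hr : f' 0 ∉ Set.range ⇑((Fin.succEmb k).trans f') := by
        rintro ⟨t, ht⟩
        exact (Fin.succ_ne_zero t) (f'.injective ht)
      refine ⟨⟨(Fin.succEmb k).trans f', f' 0⟩, ?_, ?_⟩
      · rw [Finset.mem_sigma]
        refine ⟨Finset.mem_univ _, ?_⟩
        rw [Finset.mem_sdiff, Finset.mem_image]
        refine ⟨Finset.mem_univ _, ?_⟩
        rintro ⟨t, -, ht⟩
        exact hr ⟨t, ht⟩
      · apply DFunLike.coe_injective
        show Fin.cons (f' 0) (⇑f' ∘ Fin.succ) = ⇑f'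
        exact Fin.cons_self_tail ⇑f'
    · rintro ⟨f, j⟩ hp
      rw [term_consEmb]

/-- `(Q_0 ∘ ⋯ ∘ Q_{n-1}) (x₁⋯x_n) = ((Q_0 ∘ ⋯ ∘ Q_{n-2}) (x₁⋯x_n))²`. -/
theorem milnor_composite_prod_eq_sq (n : ℕ) (hn : 1 ≤ n) :
    ((List.ofFn fun k : Fin n => Q (Fin n) (k : ℕ)).foldr (· ∘ₗ ·) LinearMap.id)
        (∏ j : Fin n, X j) =
      (((List.ofFn fun k : Fin (n - 1) => Q (Fin n) (k : ℕ)).foldr (· ∘ₗ ·) LinearMap.id)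
        (∏ j : Fin n, X j)) ^ 2 := by
  obtain ⟨m, rfl⟩ : ∃ m, n = m + 1 := ⟨n - 1, (Nat.succ_pred_eq_of_pos hn).symm⟩
  rw [show ((List.ofFn fun k : Fin (m + 1 - 1) => Q (Fin (m + 1)) (k : ℕ))) =
      List.ofFn (fun t : Fin m => Q (Fin (m + 1)) (t : ℕ)) from rfl]
  rw [key (m + 1) (m + 1) Fin.val, key (m + 1) m Fin.val, CharTwo.sum_sq]
  refine Finset.sum_bij (fun f _ => (Fin.succEmb m).trans f) (fun _ _ => Finset.mem_univ _)
    ?_ ?_ ?_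
  · intro f _ f' _ h
    have hc : ∀ t : Fin m, f t.succ = f' t.succ := fun t =>
      congrFun (congrArg DFunLike.coe h) t
    apply DFunLike.coe_injective
    funext t
    rcases Fin.eq_zero_or_eq_succ t with rfl | ⟨s, rfl⟩
    · obtain ⟨s, hs⟩ := (Finite.injective_iff_surjective.mp f.injective) (f' 0)
      rcases Fin.eq_zero_or_eq_succ s with rfl | ⟨u, rfl⟩
      · exact hs
      · exfalso
        have h2 := hc u
        rw [hs] at h2
        exact (Fin.succ_ne_zero u) (f'.injective h2.symm)
    · exact hc s
  · intro g _
    have hj : ∃ j, j ∉ Set.range ⇑g := by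
      by_contra hcon
      push_neg at hcon
      have hs : Function.Surjective ⇑g := fun x => hcon x
      have := Fintype.card_le_of_surjective _ hs
      simp at this
    obtain ⟨j, hj⟩ := hj
    refine ⟨consEmb j g hj, Finset.mem_univ _, ?_⟩
    apply DFunLike.coe_injective
    funext t
    exact Fin.cons_succ (α := fun _ => Fin (m+1)) j (⇑g) t
  · intro f _
    have hsurj : Function.Surjective ⇑f := Finite.injective_iff_surjective.mp f.injective
    have him : univ.image ⇑f = univ := by
      ext x
      simp only [Finset.mem_image, Finset.mem_univ, iff_true]
      obtain ⟨s, hs⟩ := hsurj x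
      exact ⟨s, trivial, hs⟩
    have hcompl : univ \ univ.image ⇑((Fin.succEmb m).trans f) = {f 0} := by
      ext x
      simp only [Finset.mem_sdiff, Finset.mem_univ, true_and, Finset.mem_image,
        Finset.mem_singleton]
      constructor
      · intro hx
        obtain ⟨s, hs⟩ := hsurj x
        rcases Fin.eq_zero_or_eq_succ s with rfl | ⟨u, rfl⟩
        · exact hs.symm
        · exact absurd ⟨u, hs⟩ hx
      · rintro rfl
        rintro ⟨u, hu⟩
        exact (Fin.succ_ne_zero u) (f.injective hu)
    rw [term, term, him, Finset.sdiff_self, Finset.prod_empty, mul_one, hcompl,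
      Finset.prod_singleton]
    simp only [Function.Embedding.trans_apply, Fin.succEmb, Function.Embedding.coeFn_mk]
    rw [Fin.prod_univ_succ, mul_pow, ← Finset.prod_pow]
    simp only [← pow_mul, Fin.val_succ, Fin.val_zero]
    rw [mul_comm]
    congr 1
end

section
/- For every n ≥ 1, in MvPolynomial (Fin n) (ZMod 2) the element (Q_0 ∘ Q_1 ∘ ⋯ ∘ Q_{n-2}) (∏_{j : Fin n} X j) is nonzero, where the composite has n − 1 factors (and is the identity when n = 1). (This is the nonvanishing of the element ω = Q₀⋯Q_{n−2} ι_n used in the paper's Lemma 2.) -/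
/-!
Over `𝔽₂` every derivation kills squares, and `Q_a (Q_b (X j)) = Q_a (X j ^ 2 ^ (b + 1)) = 0`, so
the `Q_a` commute and `Q_a (x_s · y²) = ∑_{j ∈ s} x_{s ∖ j} · x_j ^ 2 ^ (a + 1) · y²`. Hence for
distinct `a₁, …, a_k` with `k ≤ |s|`, every monomial of `Q_{a₁} ⋯ Q_{a_k} (x_s · y²)` arises by
raising `k` distinct variables of `s` to the distinct exponents `2 ^ (a_i + 1)`. Applying `Q_a`
first and taking any monomial `m` of the summand for `j₀`, `m` has exponent `2 ^ (a + 1)` at `j₀`,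
which no other summand can produce; so `m` survives and the result is nonzero by induction on `k`.
-/

open MvPolynomial

theorem Derivation.leibniz_finsetProd {R A M : Type*} [CommSemiring R] [CommSemiring A]
    [Algebra R A] [AddCommMonoid M] [Module A M] [Module R M] [IsScalarTower R A M]
    (D : Derivation R A M) {ι : Type*} [DecidableEq ι] (s : Finset ι) (f : ι → A) :
    D (∏ i ∈ s, f i) = ∑ i ∈ s, (∏ k ∈ s.erase i, f k) • D (f i) := by
  induction s using Finset.induction with
  | empty => simp
  | insert a s ha ih =>
    rw [Finset.prod_insert ha, Derivation.leibniz, ih, Finset.sum_insert ha, Finset.erase_insert ha,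
      Finset.smul_sum, add_comm]
    congr 1
    refine Finset.sum_congr rfl fun i hi => ?_
    have hai : a ≠ i := fun h => ha (h ▸ hi)
    rw [Finset.erase_insert_of_ne hai, Finset.prod_insert fun h => ha (Finset.mem_of_mem_erase h),
      mul_smul]

theorem MvPolynomial.prod_X_pow_eq_monomial_equivFunOnFinite {R σ : Type*} [CommSemiring R]
    [Fintype σ] (e : σ → ℕ) :
    ∏ j, X j ^ e j = monomial (Finsupp.equivFunOnFinite.symm e) (1 : R) := by
  rw [monomial_eq, C_1, one_mul, Finsupp.prod_fintype _ _ fun _ => pow_zero _]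
  rfl

section Milnor

variable {σ : Type*}

noncomputable abbrev milnorDerivation (σ : Type*) (i : ℕ) :
    Derivation (ZMod 2) (MvPolynomial σ (ZMod 2)) (MvPolynomial σ (ZMod 2)) :=
  mkDerivation (ZMod 2) fun j => X j ^ 2 ^ (i + 1)

lemma Q_apply_s3 (i : ℕ) (p : MvPolynomial σ (ZMod 2)) : Q σ i p = milnorDerivation σ i p := rfl

lemma Q_pow_of_even (i : ℕ) (p : MvPolynomial σ (ZMod 2)) {m : ℕ} (hm : Even m) :
    Q σ i (p ^ m) = 0 := by
  obtain ⟨k, rfl⟩ := hm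
  rw [Q_apply_s3, Derivation.leibniz_pow, add_nsmul, CharTwo.add_self_eq_zero]

lemma Q_Q_X (a b : ℕ) (j : σ) : Q σ a (Q σ b (X j)) = 0 := by
  rw [Q_apply_s3 b, mkDerivation_X, Q_pow_of_even _ _ (Nat.even_pow.mpr ⟨even_two, by omega⟩)]

lemma Q_commute (a b : ℕ) : Commute (Q σ a) (Q σ b) := by
  have hbracket : ⁅milnorDerivation σ a, milnorDerivation σ b⁆ = 0 :=
    derivation_ext fun j => by
      rw [Derivation.commutator_apply, ← Q_apply_s3, ← Q_apply_s3, ← Q_apply_s3, ← Q_apply_s3, Q_Q_X, Q_Q_X,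
        sub_zero, Derivation.zero_apply]
  refine LinearMap.ext fun p => sub_eq_zero.mp ?_
  change milnorDerivation σ a (milnorDerivation σ b p) -
    milnorDerivation σ b (milnorDerivation σ a p) = 0
  rw [← Derivation.commutator_apply, hbracket, Derivation.zero_apply]

lemma Q_commute_listProd_map (a : ℕ) (l : List ℕ) : Commute (Q σ a) (l.map (Q σ)).prod :=
  Commute.list_prod_right _ _ <| by simpa using fun b _ => Q_commute a b

/-- The monomial `∏ j, X j ^ e j` is `∏ j ∈ s, X j` times a square. -/
def OneOnEvenOff (s : Finset σ) (e : σ → ℕ) : Prop :=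
  (∀ j ∈ s, e j = 1) ∧ ∀ j ∉ s, Even (e j)

variable [DecidableEq σ]

lemma OneOnEvenOff.update_erase {s : Finset σ} {e : σ → ℕ} (h : OneOnEvenOff s e) {j : σ}
    (hj : j ∈ s) (i : ℕ) : OneOnEvenOff (s.erase j) (Function.update e j (2 ^ (i + 1))) := by
  refine ⟨fun k hk => ?_, fun k hk => ?_⟩
  · rw [Function.update_of_ne (Finset.ne_of_mem_erase hk)]
    exact h.1 k (Finset.mem_of_mem_erase hk)
  · rcases eq_or_ne k j with rfl | hkj
    · rw [Function.update_self]
      exact Nat.even_pow.mpr ⟨even_two, by omega⟩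
    · rw [Function.update_of_ne hkj]
      exact h.2 k fun hks => hk (Finset.mem_erase.mpr ⟨hkj, hks⟩)

variable [Fintype σ] {s : Finset σ} {e : σ → ℕ}

lemma Q_prod_X_pow (h : OneOnEvenOff s e) (i : ℕ) :
    Q σ i (∏ j, X j ^ e j) = ∑ j ∈ s, ∏ k, X k ^ Function.update e j (2 ^ (i + 1)) k := by
  rw [Q_apply_s3, Derivation.leibniz_finsetProd, ← Finset.sum_subset (Finset.subset_univ s)]
  · refine Finset.sum_congr rfl fun j hj => ?_
    rw [← Q_apply_s3, h.1 j hj, pow_one, Q_apply_s3, mkDerivation_X, smul_eq_mul,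
      ← Finset.prod_erase_mul _ _ (Finset.mem_univ j), Function.update_self]
    congr 1
    exact Finset.prod_congr rfl fun k hk => by rw [Function.update_of_ne (Finset.ne_of_mem_erase hk)]
  · intro j _ hj
    rw [← Q_apply_s3, Q_pow_of_even _ _ (h.2 j hj), smul_zero]

lemma listProd_map_Q_cons_apply (h : OneOnEvenOff s e) (a : ℕ) (l : List ℕ) :
    ((a :: l).map (Q σ)).prod (∏ j, X j ^ e j) =
      ∑ j ∈ s, (l.map (Q σ)).prod (∏ k, X k ^ Function.update e j (2 ^ (a + 1)) k) := by
  rw [List.map_cons, List.prod_cons, (Q_commute_listProd_map a l).eq, Module.End.mul_apply,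
    Q_prod_X_pow h, map_sum]

lemma exponent_of_mem_support_listProd_map_Q (h : OneOnEvenOff s e) (l : List ℕ) {m : σ →₀ ℕ}
    (hm : m ∈ ((l.map (Q σ)).prod (∏ j, X j ^ e j)).support) (k : σ) :
    m k = e k ∨ k ∈ s ∧ ∃ b ∈ l, m k = 2 ^ (b + 1) := by
  induction l generalizing s e with
  | nil =>
    rw [List.map_nil, List.prod_nil, Module.End.one_apply, prod_X_pow_eq_monomial_equivFunOnFinite,
      support_monomial, if_neg one_ne_zero, Finset.mem_singleton] at hm
    exact Or.inl (by rw [hm]; rfl)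
  | cons a l ih =>
    rw [listProd_map_Q_cons_apply h] at hm
    obtain ⟨j, hj, hmj⟩ := Finset.mem_biUnion.mp (support_sum hm)
    rcases ih (h.update_erase hj a) hmj with hk | ⟨hk, b, hb, hmk⟩
    · rcases eq_or_ne k j with rfl | hkj
      · exact Or.inr ⟨hj, a, List.mem_cons_self, by rwa [Function.update_self] at hk⟩
      · exact Or.inl (by rwa [Function.update_of_ne hkj] at hk)
    · exact Or.inr ⟨Finset.mem_of_mem_erase hk, b, List.mem_cons_of_mem a hb, hmk⟩

lemma listProd_map_Q_apply_ne_zero {l : List ℕ} (hl : l.Nodup) (h : OneOnEvenOff s e)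
    (hcard : l.length ≤ s.card) : (l.map (Q σ)).prod (∏ j, X j ^ e j) ≠ 0 := by
  induction l generalizing s e with
  | nil => exact Finset.prod_ne_zero_iff.mpr fun j _ => pow_ne_zero _ (X_ne_zero j)
  | cons a l ih =>
    obtain ⟨ha, hl⟩ := List.nodup_cons.mp hl
    rw [List.length_cons] at hcard
    obtain ⟨j₀, hj₀⟩ : s.Nonempty := Finset.card_pos.mp (by omega)
    set T : σ → MvPolynomial σ (ZMod 2) := fun j =>
      (l.map (Q σ)).prod (∏ k, X k ^ Function.update e j (2 ^ (a + 1)) k)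
    have hT₀ : T j₀ ≠ 0 :=
      ih hl (h.update_erase hj₀ a) (by rw [Finset.card_erase_of_mem hj₀]; omega)
    obtain ⟨m, hm⟩ := support_nonempty.mpr hT₀
    have hmj₀ : m j₀ = 2 ^ (a + 1) := by
      simpa [Finset.notMem_erase] using
        exponent_of_mem_support_listProd_map_Q (h.update_erase hj₀ a) l hm j₀
    have hcoeff : ∀ j ∈ s, j ≠ j₀ → coeff m (T j) = 0 := by
      intro j hj hjj₀
      by_contra hne
      rcases exponent_of_mem_support_listProd_map_Q (h.update_erase hj a) l
        (mem_support_iff.mpr hne) j₀ with hk | ⟨-, b, hb, hmb⟩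
      · rw [Function.update_of_ne hjj₀.symm, h.1 j₀ hj₀, hmj₀] at hk
        exact (Nat.one_lt_two_pow (by omega)).ne' hk
      · rw [hmj₀] at hmb
        obtain rfl : a = b := Nat.succ_injective (Nat.pow_right_injective le_rfl hmb)
        exact ha hb
    intro hzero
    have hcoeff_zero := congrArg (coeff m) hzero
    rw [listProd_map_Q_cons_apply h, coeff_sum, Finset.sum_eq_single_of_mem j₀ hj₀ hcoeff,
      coeff_zero] at hcoeff_zero
    exact mem_support_iff.mp hm hcoeff_zero

end Milnor

theorem milnor_composite_prod_ne_zero_general (n : ℕ) :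
    ((List.ofFn fun k : Fin (n - 1) => Q (Fin n) (k : ℕ)).foldr (· ∘ₗ ·) LinearMap.id)
        (∏ j : Fin n, X j) ≠ 0 := by
  have hcomposite :
      (List.ofFn fun k : Fin (n - 1) => Q (Fin n) (k : ℕ)).foldr (· ∘ₗ ·) LinearMap.id =
        ((List.ofFn fun k : Fin (n - 1) => (k : ℕ)).map (Q (Fin n))).prod := by
    rw [List.map_ofFn]
    rfl
  have hone : OneOnEvenOff (Finset.univ : Finset (Fin n)) fun _ => 1 :=
    ⟨fun _ _ => rfl, fun j hj => absurd (Finset.mem_univ j) hj⟩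
  rw [hcomposite]
  simpa only [pow_one] using
    listProd_map_Q_apply_ne_zero (List.nodup_ofFn.mpr Fin.val_injective) hone (by simp)

/-- The element `ω = Q₀⋯Q_{n-2} (x₁⋯x_n)` is nonzero. -/
theorem milnor_composite_prod_ne_zero (n : ℕ) (hn : 1 ≤ n) :
    ((List.ofFn fun k : Fin (n - 1) => Q (Fin n) (k : ℕ)).foldr (· ∘ₗ ·) LinearMap.id)
        (∏ j : Fin n, X j) ≠ 0 :=
  milnor_composite_prod_ne_zero_general n
end

section
/- Let n ≥ 2. In MvPolynomial (Fin n) (ZMod 2) define f_0 = (Q_0 ∘ Q_1 ∘ ⋯ ∘ Q_{n-2}) (∏_{j : Fin n} X j) and recursively f_{r+1} = MvPolynomial.homogeneousComponent (2^{r+1} * (2^n − 2) + 1) (Sq f_r). Then for every r ≥ 0, f_r is homogeneous of degree 2^r * (2^n − 2) + 1 and f_r ≠ 0. (This realizes the claim (Sq₁)^r ω ≠ 0 for all r ≥ 0 of the paper's Lemma 2, where ω = Q₀⋯Q_{n−2} ι_n and Sq₁ x = Sq^{|x|−1} x, so that iterating Sq₁ from degree d lands in degree 2d − 1.) -/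
open MvPolynomial

/-- The total Steenrod square: the `𝔽₂`-algebra endomorphism sending
each variable `X j` to `X j + (X j)²`. -/
noncomputable def Sq (σ : Type*) :
    MvPolynomial σ (ZMod 2) →ₐ[ZMod 2] MvPolynomial σ (ZMod 2) :=
  MvPolynomial.aeval fun j => MvPolynomial.X j + (MvPolynomial.X j) ^ 2

/-- `f_0 = Q₀⋯Q_{n-2}(x₁⋯x_n)`, and `f_{r+1} = Sq¹ f_r` (the homogeneous
component of `Sq f_r` in degree `2^{r+1}(2^n - 2) + 1`). -/
noncomputable def fseq (n : ℕ) : ℕ → MvPolynomial (Fin n) (ZMod 2)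
  | 0 =>
      ((List.ofFn fun k : Fin (n - 1) => Q (Fin n) (k : ℕ)).foldr (· ∘ₗ ·) LinearMap.id)
        (∏ j : Fin n, X j)
  | r + 1 =>
      MvPolynomial.homogeneousComponent (2 ^ (r + 1) * (2 ^ n - 2) + 1) (Sq (Fin n) (fseq n r))

/-!
Each `Q_i` sends a monomial to the sum, over its variables of odd exponent `e`, of the monomial
with `e` replaced by `e + 2^(i+1) - 1`. Starting from `x_1 ⋯ x_n`, the operators
`Q_{n-2}, …, Q_0` therefore use up distinct variables of exponent `1`, and `f_0` is the sum, over
injections `φ : Fin (n-1) ↪ Fin n`, of the monomials with exponent `2^(i+1)` at `φ i` and `1` at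
the one remaining variable. By Frobenius `Sq (x^(2^a)) = x^(2^a) + x^(2^(a+1))`, so the degree
`2d - 1` part of `Sq` of a degree `d` monomial whose exponents are powers of two doubles all
exponents but one that equals `1`. Each summand has exactly one such exponent, so `Sq₁` just
doubles the exponents `2^(i+1)`; the summands of `f_r` stay pairwise distinct, hence nothing
cancels mod 2.
-/

open Finset

section Monomials

variable {σ R : Type*} [CommSemiring R]

lemma homogeneousComponent_monomial (n : ℕ) (u : σ →₀ ℕ) (a : R) :
    homogeneousComponent n (monomial u a) = if u.degree = n then monomial u a else 0 := by
  rw [homogeneousComponent_of_mem ((mem_homogeneousSubmodule _ _).mpr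
    (isHomogeneous_monomial a rfl))]
  simp only [eq_comm]

lemma monomial_one_eq_prod_X_pow [Fintype σ] (u : σ →₀ ℕ) :
    monomial u (1 : R) = ∏ j, X j ^ u j := by
  rw [monomial_eq, C_1, one_mul, Finsupp.prod_fintype _ _ fun _ => pow_zero _]

lemma sum_monomial_one_ne_zero [Nontrivial R] {ι : Type*} [Fintype ι] [Nonempty ι]
    {e : ι → σ →₀ ℕ} (he : Function.Injective e) :
    ∑ i, monomial (e i) (1 : R) ≠ 0 := by
  classical
  obtain ⟨i⟩ := ‹Nonempty ι›
  refine ne_of_apply_ne (coeff (e i)) ?_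
  simp [coeff_sum, coeff_monomial, he.eq_iff]

end Monomials

lemma Q_monomial_one {σ : Type*} (i : ℕ) (w : σ →₀ ℕ) :
    Q σ i (monomial w 1) =
      ∑ j ∈ w.support with Odd (w j), monomial (w + Finsupp.single j (2 ^ (i + 1) - 1)) 1 := by
  rw [Q, Derivation.coeFn_coe, mkDerivation_monomial, one_smul, Finsupp.sum, sum_filter]
  refine sum_congr rfl fun j _ => ?_
  split_ifs with h
  · rw [ZMod.natCast_eq_one_iff_odd.mpr h, X_pow_eq_monomial, smul_eq_mul, monomial_mul, one_mul]
    refine congrArg (monomial · 1) (Finsupp.ext fun k => ?_)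
    obtain rfl | hk := eq_or_ne j k
    · have : 1 ≤ w j := h.pos
      have : 1 ≤ 2 ^ (i + 1) := Nat.one_le_two_pow
      simp only [Finsupp.coe_add, Finsupp.coe_tsub, Pi.add_apply, Pi.sub_apply,
        Finsupp.single_eq_same]
      omega
    · simp [Finsupp.single_eq_of_ne' hk]
  · rw [ZMod.natCast_eq_zero_iff_even.mpr (Nat.not_odd_iff_even.mp h), monomial_zero, zero_smul]

lemma Finset.sum_eq_one_iff_of_pos {ι : Type*} {f : ι → ℕ} (hf : ∀ i, 0 < f i) (t : Finset ι) :
    ∑ i ∈ t, f i = 1 ↔ ∃ i, f i = 1 ∧ t = {i} := by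
  refine ⟨fun h => ?_, ?_⟩
  · have hcard : t.card • 1 ≤ ∑ i ∈ t, f i := card_nsmul_le_sum t f 1 fun i _ => hf i
    have hpos : 0 < t.card := (nonempty_of_sum_ne_zero (h ▸ one_ne_zero)).card_pos
    rw [smul_eq_mul, mul_one, h] at hcard
    obtain ⟨i, rfl⟩ := card_eq_one.mp (by omega : t.card = 1)
    exact ⟨i, by rwa [sum_singleton] at h, rfl⟩
  · rintro ⟨i, hi, rfl⟩
    rw [sum_singleton, hi]

section SteenrodSquares

variable {σ : Type*}

lemma Sq_X_pow_two_pow (j : σ) (a : ℕ) :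
    Sq σ (X j ^ 2 ^ a) = X j ^ 2 ^ a + X j ^ (2 * 2 ^ a) := by
  rw [map_pow, Sq, aeval_X, add_pow_char_pow, ← pow_mul]

variable [Fintype σ] [DecidableEq σ]

lemma Sq_monomial_one (w : σ →₀ ℕ) (hw : ∀ j, ∃ a, w j = 2 ^ a) :
    Sq σ (monomial w 1) = ∑ t ∈ univ.powerset, monomial (w + w.filter (· ∉ t)) 1 := by
  have hSq : ∀ j, Sq σ (X j ^ w j) = X j ^ w j + X j ^ (2 * w j) := fun j => by
    obtain ⟨a, ha⟩ := hw j
    rw [ha, Sq_X_pow_two_pow]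
  rw [monomial_one_eq_prod_X_pow, map_prod, prod_congr rfl fun j _ => hSq j, prod_add]
  refine sum_congr rfl fun t _ => ?_
  rw [monomial_one_eq_prod_X_pow, ← prod_mul_prod_compl t, compl_eq_univ_sdiff]
  congr 1 <;> refine prod_congr rfl fun j hj => ?_
  · simp [hj]
  · simp_all [two_mul]

lemma homogeneousComponent_Sq_monomial_one (w : σ →₀ ℕ) (hw : ∀ j, ∃ a, w j = 2 ^ a)
    (hw0 : w ≠ 0) :
    homogeneousComponent (2 * w.degree - 1) (Sq σ (monomial w 1)) =
      ∑ j with w j = 1, monomial (w + w.erase j) 1 := by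
  have hpos : ∀ j, 0 < w j := fun j => by
    obtain ⟨a, ha⟩ := hw j
    exact ha ▸ Nat.two_pow_pos a
  have hdeg : ∀ t : Finset σ,
      (w + w.filter (· ∉ t)).degree = 2 * w.degree - 1 ↔ ∑ j ∈ t, w j = 1 := by
    intro t
    have hfilter : (w.filter (· ∉ t)).degree = ∑ j ∈ tᶜ, w j := by
      simp only [Finsupp.degree_eq_sum, Finsupp.filter_apply]
      rw [← sum_filter]
      congr 1
      ext
      simp
    have hsplit := sum_add_sum_compl t w
    rw [map_add, hfilter, Finsupp.degree_eq_sum]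
    have := (Finsupp.degree_eq_zero_iff w).not.mpr hw0
    rw [Finsupp.degree_eq_sum] at this
    omega
  have hsupport :
      {t ∈ (univ : Finset σ).powerset | (w + w.filter (· ∉ t)).degree = 2 * w.degree - 1} =
        ({j | w j = 1} : Finset σ).map ⟨({·}), singleton_injective⟩ := by
    ext t
    rw [mem_filter, hdeg, sum_eq_one_iff_of_pos hpos]
    simp [eq_comm]
  rw [Sq_monomial_one w hw, map_sum]
  simp_rw [homogeneousComponent_monomial]
  rw [← sum_filter, hsupport, sum_map]
  refine sum_congr rfl fun j _ => ?_
  congr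
  ext k
  simp [Finsupp.filter_apply, Finsupp.erase_apply]

end SteenrodSquares

section MilnorExponents

variable {σ : Type*} {m : ℕ}

noncomputable def milnorExp [Finite σ] (s : ℕ) (φ : Fin m ↪ σ) : σ →₀ ℕ :=
  Finsupp.equivFunOnFinite.symm (Function.extend φ (fun i => 2 ^ (s + i + 1)) 1)

variable [Finite σ] {s : ℕ} {φ : Fin m ↪ σ} {j : σ}

lemma milnorExp_apply_embedding (s : ℕ) (φ : Fin m ↪ σ) (i : Fin m) :
    milnorExp s φ (φ i) = 2 ^ (s + i + 1) :=
  φ.injective.extend_apply (fun i : Fin m => 2 ^ (s + i + 1)) 1 i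

lemma milnorExp_apply_of_notMem_range (hj : j ∉ Set.range φ) : milnorExp s φ j = 1 :=
  Function.extend_apply' (fun i : Fin m => 2 ^ (s + i + 1)) (1 : σ → ℕ) j
    fun ⟨i, hi⟩ => hj ⟨i, hi⟩

lemma milnorExp_eq_two_pow_iff {i : Fin m} : milnorExp s φ j = 2 ^ (s + i + 1) ↔ φ i = j := by
  refine ⟨fun h => ?_, fun h => h ▸ milnorExp_apply_embedding s φ i⟩
  by_cases hj : j ∈ Set.range φ
  · obtain ⟨i', rfl⟩ := hj
    rw [milnorExp_apply_embedding] at h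
    have := Nat.pow_right_injective le_rfl h
    rw [Fin.ext (by omega : (i : ℕ) = i')]
  · rw [milnorExp_apply_of_notMem_range hj] at h
    exact absurd h (Nat.one_lt_two_pow (by omega)).ne

lemma odd_milnorExp_iff : Odd (milnorExp s φ j) ↔ j ∉ Set.range φ := by
  refine ⟨?_, fun hj => milnorExp_apply_of_notMem_range hj ▸ odd_one⟩
  rintro h ⟨i, rfl⟩
  rw [milnorExp_apply_embedding] at h
  exact Nat.not_odd_iff_even.mpr (Nat.even_pow.mpr ⟨even_two, by omega⟩) h

lemma milnorExp_eq_one_iff : milnorExp s φ j = 1 ↔ j ∉ Set.range φ :=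
  ⟨fun h => odd_milnorExp_iff.mp (h ▸ odd_one), milnorExp_apply_of_notMem_range⟩

lemma exists_milnorExp_eq_two_pow (s : ℕ) (φ : Fin m ↪ σ) (j : σ) :
    ∃ a, milnorExp s φ j = 2 ^ a := by
  by_cases hj : j ∈ Set.range φ
  · obtain ⟨i, rfl⟩ := hj
    exact ⟨_, milnorExp_apply_embedding s φ i⟩
  · exact ⟨0, milnorExp_apply_of_notMem_range hj⟩

lemma milnorExp_injective (s : ℕ) : Function.Injective (milnorExp (σ := σ) (m := m) s) :=
  fun φ ψ h => Function.Embedding.ext fun i =>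
    ((milnorExp_eq_two_pow_iff (φ := ψ)).mp (h ▸ milnorExp_apply_embedding s φ i)).symm

lemma milnorExp_add_single (hj : j ∉ Set.range φ) :
    milnorExp (s + 1) φ + Finsupp.single j (2 ^ (s + 1) - 1) =
      milnorExp s ((Equiv.embeddingFinSucc m σ).symm ⟨φ, j, hj⟩) := by
  set ψ := (Equiv.embeddingFinSucc m σ).symm ⟨φ, j, hj⟩
  have hψ : ⇑ψ = Fin.cons j φ := Equiv.coe_embeddingFinSucc_symm _
  ext k
  rw [Finsupp.add_apply]
  by_cases hk : k ∈ Set.range ψ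
  · obtain ⟨i, rfl⟩ := hk
    rw [milnorExp_apply_embedding]
    induction i using Fin.cases with
    | zero =>
      have : 1 ≤ 2 ^ (s + 1) := Nat.one_le_two_pow
      rw [hψ, Fin.cons_zero, milnorExp_apply_of_notMem_range hj, Finsupp.single_eq_same]
      simp only [Fin.val_zero, add_zero]
      omega
    | succ i =>
      have hij : φ i ≠ j := fun h => hj ⟨i, h⟩
      rw [hψ, Fin.cons_succ, milnorExp_apply_embedding, Finsupp.single_eq_of_ne hij, add_zero,
        Fin.val_succ]
      ring_nf
  · have hkj : k ≠ j := fun h => hk ⟨0, by rw [hψ, Fin.cons_zero, h]⟩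
    have hkφ : k ∉ Set.range φ := fun ⟨i, h⟩ =>
      hk ⟨i.succ, by rw [hψ, Fin.cons_succ, h]⟩
    rw [milnorExp_apply_of_notMem_range hk, milnorExp_apply_of_notMem_range hkφ,
      Finsupp.single_eq_of_ne hkj, add_zero]

lemma milnorExp_add_erase [DecidableEq σ] (hj : ∀ k, k ∉ Set.range φ ↔ k = j) :
    milnorExp s φ + (milnorExp s φ).erase j = milnorExp (s + 1) φ := by
  ext k
  rw [Finsupp.add_apply, Finsupp.erase_apply]
  split_ifs with hk
  · rw [add_zero, milnorExp_apply_of_notMem_range ((hj k).mpr hk),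
      milnorExp_apply_of_notMem_range ((hj k).mpr hk)]
  · obtain ⟨i, rfl⟩ : k ∈ Set.range φ := not_not.mp fun h => hk ((hj k).mp h)
    rw [milnorExp_apply_embedding, milnorExp_apply_embedding]
    ring

end MilnorExponents

section MilnorExponentsFintype

variable {σ : Type*} [Fintype σ] {m : ℕ}

lemma degree_milnorExp (s : ℕ) (φ : Fin m ↪ σ) :
    (milnorExp s φ).degree = 2 ^ (s + 1) * (2 ^ m - 1) + (Fintype.card σ - m) := by
  classical
  rw [Finsupp.degree_eq_sum, ← sum_add_sum_compl (univ.map φ), sum_map]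
  congr 1
  · simp_rw [milnorExp_apply_embedding, add_right_comm s _ 1, pow_add 2 (s + 1), ← mul_sum]
    rw [Fin.sum_univ_eq_sum_range (2 ^ ·) m, Nat.geomSum_eq le_rfl, Nat.add_one_sub_one,
      Nat.div_one]
  · rw [sum_congr rfl fun k hk => milnorExp_apply_of_notMem_range (by simpa using hk)]
    simp [card_compl]

lemma degree_milnorExp_of_succ_eq_card (hm : m + 1 = Fintype.card σ) (s : ℕ)
    (φ : Fin m ↪ σ) :
    (milnorExp s φ).degree = 2 ^ s * (2 ^ Fintype.card σ - 2) + 1 := by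
  have h2 : 2 ^ (m + 1) - 2 = 2 * (2 ^ m - 1) := by
    have := Nat.one_le_two_pow (n := m)
    rw [pow_succ]
    omega
  rw [degree_milnorExp, ← hm, h2, Nat.add_sub_cancel_left, pow_succ, mul_assoc]

variable [DecidableEq σ]

lemma foldr_Q_prod_X (s : ℕ) :
    (List.ofFn fun k : Fin m => Q σ (s + k)).foldr (· ∘ₗ ·) LinearMap.id (∏ j, X j) =
      ∑ φ : Fin m ↪ σ, monomial (milnorExp s φ) 1 := by
  induction m generalizing s with
  | zero =>
    simp [monomial_one_eq_prod_X_pow, milnorExp_apply_of_notMem_range]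
  | succ m ih =>
    have hshift :
        (fun k : Fin m => Q σ (s + (k.succ : ℕ))) = fun k : Fin m => Q σ (s + 1 + k) :=
      funext fun k => by rw [Fin.val_succ, add_right_comm, add_assoc]
    rw [List.ofFn_succ, List.foldr_cons, hshift, LinearMap.comp_apply, ih, map_sum,
      ← (Equiv.embeddingFinSucc m σ).symm.sum_comp, Fintype.sum_sigma]
    refine sum_congr rfl fun φ _ => ?_
    rw [Fin.val_zero, add_zero, Q_monomial_one,
      sum_subtype _ (p := (· ∉ Set.range φ)) (fun j => ?_)]
    · exact Fintype.sum_congr _ _ fun j => by rw [milnorExp_add_single j.2]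
    · rw [mem_filter, Finsupp.mem_support_iff, odd_milnorExp_iff, and_iff_right_iff_imp]
      intro hj
      rw [milnorExp_apply_of_notMem_range hj]
      exact one_ne_zero

lemma homogeneousComponent_Sq_monomial_milnorExp (hm : m + 1 = Fintype.card σ) (s : ℕ)
    (φ : Fin m ↪ σ) :
    homogeneousComponent (2 * (milnorExp s φ).degree - 1) (Sq σ (monomial (milnorExp s φ) 1)) =
      monomial (milnorExp (s + 1) φ) 1 := by
  obtain ⟨j, hj⟩ : ∃ j, ∀ k, k ∉ Set.range φ ↔ k = j := by
    have : ((univ.map φ)ᶜ).card = 1 := by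
      rw [card_compl, card_map, card_univ, Fintype.card_fin]
      omega
    obtain ⟨j, hj⟩ := card_eq_one.mp this
    exact ⟨j, fun k => by simpa using Finset.ext_iff.mp hj k⟩
  have hne : milnorExp s φ ≠ 0 := fun h => by
    simpa [h] using milnorExp_apply_of_notMem_range (s := s) ((hj j).mpr rfl)
  have hone : ({k | milnorExp s φ k = 1} : Finset σ) = {j} := by
    ext k
    rw [mem_filter, milnorExp_eq_one_iff, hj, mem_singleton]
    exact and_iff_right (mem_univ k)
  rw [homogeneousComponent_Sq_monomial_one _ (exists_milnorExp_eq_two_pow s φ) hne, hone,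
    sum_singleton, milnorExp_add_erase hj]

end MilnorExponentsFintype

lemma fseq_eq_sum {n : ℕ} (hn : 0 < n) (r : ℕ) :
    fseq n r = ∑ φ : Fin (n - 1) ↪ Fin n, monomial (milnorExp r φ) 1 := by
  have hcard : n - 1 + 1 = Fintype.card (Fin n) := by rw [Fintype.card_fin]; omega
  induction r with
  | zero =>
    rw [fseq]
    simpa using foldr_Q_prod_X (σ := Fin n) (m := n - 1) 0
  | succ r ih =>
    rw [fseq, ih, map_sum, map_sum]
    refine sum_congr rfl fun φ _ => ?_
    have hdeg : 2 ^ (r + 1) * (2 ^ n - 2) + 1 = 2 * (milnorExp r φ).degree - 1 := by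
      rw [degree_milnorExp_of_succ_eq_card hcard, Fintype.card_fin, pow_succ]
      ring_nf
      omega
    rw [hdeg, homogeneousComponent_Sq_monomial_milnorExp hcard]

/-- `(Sq₁)^r ω ≠ 0`: each `f_r` is nonzero and homogeneous of degree
`2^r (2^n - 2) + 1`. -/
theorem sq_one_iterates_ne_zero (n : ℕ) (hn : 2 ≤ n) (r : ℕ) :
    (fseq n r).IsHomogeneous (2 ^ r * (2 ^ n - 2) + 1) ∧ fseq n r ≠ 0 := by
  have hcard : n - 1 + 1 = Fintype.card (Fin n) := by rw [Fintype.card_fin]; omega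
  have : Nonempty (Fin (n - 1) ↪ Fin n) := ⟨Fin.castLEEmb (Nat.sub_le n 1)⟩
  rw [fseq_eq_sum (by omega) r]
  refine ⟨IsHomogeneous.sum _ _ _ fun φ _ => isHomogeneous_monomial _ ?_,
    sum_monomial_one_ne_zero (milnorExp_injective r)⟩
  rw [degree_milnorExp_of_succ_eq_card hcard, Fintype.card_fin]
end

section
/- Let σ be a type and let f ∈ MvPolynomial σ (ZMod 2) be homogeneous of degree d. Then MvPolynomial.homogeneousComponent (2 * d) (Sq f) = f ^ 2. (This is the instability relation Sq^{|f|} f = Sq₀ f = f² in the polynomial model of the cohomology of elementary abelian 2-groups.) -/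
/-!
Since `X ↦ X + X²` raises degrees by at most a factor of two, the degree-`2d` part of `Sq f`
only sees the quadratic part `X²` of each substituted variable: it equals `f(X²)`, which is
`f²` by the Frobenius identity over `𝔽₂`.
-/

open MvPolynomial

namespace MvPolynomial

variable {σ R : Type*} [CommSemiring R]

theorem homogeneousComponent_mul_of_totalDegree_le {P Q : MvPolynomial σ R} {a b : ℕ}
    (hP : P.totalDegree ≤ a) (hQ : Q.totalDegree ≤ b) :
    homogeneousComponent (a + b) (P * Q) =
      homogeneousComponent a P * homogeneousComponent b Q := by
  classical
  ext m
  rw [coeff_homogeneousComponent]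
  split_ifs with hm
  · rw [coeff_mul, coeff_mul]
    refine Finset.sum_congr rfl fun ⟨u, v⟩ huv => ?_
    have hdeg : u.degree + v.degree = a + b := by
      rw [← map_add, Finset.HasAntidiagonal.mem_antidiagonal.mp huv, hm]
    simp only [coeff_homogeneousComponent]
    rcases lt_trichotomy u.degree a with hu | hu | hu
    · have hv : coeff v Q = 0 := coeff_eq_zero_of_totalDegree_lt (by rw [← v.degree_apply]; omega)
      simp [hv]
    · simp [hu, show v.degree = b by omega]
    · have hu' : coeff u P = 0 := coeff_eq_zero_of_totalDegree_lt (by rw [← u.degree_apply]; omega)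
      simp [hu']
  · exact (((homogeneousComponent_isHomogeneous a P).mul
      (homogeneousComponent_isHomogeneous b Q)).coeff_eq_zero hm).symm

theorem homogeneousComponent_prod_of_totalDegree_le {ι : Type*} (s : Finset ι)
    (Q : ι → MvPolynomial σ R) (n : ι → ℕ) (h : ∀ i ∈ s, (Q i).totalDegree ≤ n i) :
    homogeneousComponent (∑ i ∈ s, n i) (∏ i ∈ s, Q i) =
      ∏ i ∈ s, homogeneousComponent (n i) (Q i) := by
  classical
  induction s using Finset.induction_on with
  | empty => simp
  | insert j s hj ih =>
    have hs : ∀ i ∈ s, (Q i).totalDegree ≤ n i := fun i hi => h i (Finset.mem_insert_of_mem hi)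
    rw [Finset.sum_insert hj, Finset.prod_insert hj, Finset.prod_insert hj,
      homogeneousComponent_mul_of_totalDegree_le (h j (Finset.mem_insert_self j s))
        ((totalDegree_finsetProd s Q).trans (Finset.sum_le_sum hs)), ih hs]

theorem homogeneousComponent_pow_of_totalDegree_le {P : MvPolynomial σ R} {n : ℕ}
    (h : P.totalDegree ≤ n) (e : ℕ) :
    homogeneousComponent (e * n) (P ^ e) = homogeneousComponent n P ^ e := by
  simpa using homogeneousComponent_prod_of_totalDegree_le (Finset.range e) (fun _ => P)
    (fun _ => n) fun _ _ => h

variable {τ : Type*} {g : σ → MvPolynomial τ R} {k : ℕ}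

theorem homogeneousComponent_aeval_monomial_of_totalDegree_le (hg : ∀ j, (g j).totalDegree ≤ k)
    (m : σ →₀ ℕ) (c : R) :
    homogeneousComponent (k * m.degree) (aeval g (monomial m c)) =
      aeval (fun j => homogeneousComponent k (g j)) (monomial m c) := by
  have hdeg : k * m.degree = ∑ j ∈ m.support, m j * k := by
    rw [Finsupp.degree_apply, Finset.mul_sum]
    exact Finset.sum_congr rfl fun j _ => Nat.mul_comm _ _
  simp only [aeval_monomial, algebraMap_eq, homogeneousComponent_C_mul, Finsupp.prod, hdeg,
    homogeneousComponent_prod_of_totalDegree_le _ _ _ fun j _ => (totalDegree_pow _ _).trans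
      (Nat.mul_le_mul_left _ (hg j)),
    homogeneousComponent_pow_of_totalDegree_le (hg _)]

theorem homogeneousComponent_aeval_of_isHomogeneous (hg : ∀ j, (g j).totalDegree ≤ k)
    {f : MvPolynomial σ R} {d : ℕ} (hf : f.IsHomogeneous d) :
    homogeneousComponent (k * d) (aeval g f) =
      aeval (fun j => homogeneousComponent k (g j)) f := by
  conv_lhs => rw [f.as_sum]
  conv_rhs => rw [f.as_sum]
  simp only [map_sum]
  refine Finset.sum_congr rfl fun m hm => ?_
  rw [hf.degree_eq_sum_deg_support hm]
  exact homogeneousComponent_aeval_monomial_of_totalDegree_le hg m _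

end MvPolynomial

/-- Instability: for `f` homogeneous of degree `d`, `Sq^d f = f²`. -/
theorem sq_top_eq_sq (σ : Type*) (d : ℕ) (f : MvPolynomial σ (ZMod 2))
    (hf : f.IsHomogeneous d) :
    MvPolynomial.homogeneousComponent (2 * d) (Sq σ f) = f ^ 2 := by
  have hdeg : ∀ j, (X j + X j ^ 2 : MvPolynomial σ (ZMod 2)).totalDegree ≤ 2 := fun j =>
    (totalDegree_add _ _).trans (by simp [totalDegree_X, totalDegree_X_pow])
  have htop : ∀ j, homogeneousComponent 2 (X j + X j ^ 2 : MvPolynomial σ (ZMod 2)) = X j ^ 2 :=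
    fun j => by
      rw [map_add, homogeneousComponent_of_mem (isHomogeneous_X _ j),
        homogeneousComponent_of_mem ((isHomogeneous_X _ j).pow 2)]
      simp
  rw [Sq, homogeneousComponent_aeval_of_isHomogeneous hdeg hf]
  simp only [htop]
  exact expand_zmod f
end

section
/- Let σ be a type and let f ∈ MvPolynomial σ (ZMod 2) be homogeneous of degree d. Then MvPolynomial.homogeneousComponent (d + 1) (Sq f) = Q_0 f, i.e. the first Steenrod square Sq¹ acts on 𝔽₂[x_j : j ∈ σ] as the Milnor derivation Q_0 (the derivation sending each variable to its square). -/
open MvPolynomial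

/-!
Introduce a formal parameter `t` and consider `f (x + t x²)`. When `f` is homogeneous of degree
`d`, its `t^k`-coefficient is homogeneous of degree `d + k`, and setting `t = 1` gives `Sq f`;
hence `Sq^k f` is exactly this coefficient. The `t`-linear coefficient of `f (x + t g)` is the
derivation sending `x_j` to `g_j` (first-order Taylor expansion), which for `g = x²` is `Q₀`.
-/

namespace MvPolynomial

variable {σ R : Type*} [CommSemiring R]

noncomputable def perturb (g : σ → MvPolynomial σ R) :
    MvPolynomial σ R →ₐ[R] Polynomial (MvPolynomial σ R) :=
  aeval fun j => Polynomial.C (X j) + Polynomial.C (g j) * Polynomial.X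

section perturb

variable (g : σ → MvPolynomial σ R)

theorem perturb_X (j : σ) :
    perturb g (X j) = Polynomial.C (X j) + Polynomial.C (g j) * Polynomial.X :=
  aeval_X _ _

theorem perturb_eval_one (f : MvPolynomial σ R) :
    (perturb g f).eval 1 = aeval (fun j => X j + g j) f := by
  rw [← Polynomial.coe_aeval_eq_eval, ← AlgHom.coe_restrictScalars' R, ← AlgHom.comp_apply,
    perturb, comp_aeval]
  simp

theorem perturb_coeff_zero (f : MvPolynomial σ R) : (perturb g f).coeff 0 = f := by
  have h : ((Polynomial.aeval (0 : MvPolynomial σ R)).restrictScalars R).comp (perturb g) =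
      AlgHom.id R _ := algHom_ext fun j => by simp [perturb_X]
  simpa [Polynomial.coeff_zero_eq_eval_zero] using DFunLike.congr_fun h f

theorem perturb_coeff_one (f : MvPolynomial σ R) :
    (perturb g f).coeff 1 = mkDerivation R g f := by
  induction f using MvPolynomial.induction_on with
  | C a => simp [perturb]
  | add p q hp hq => simp [hp, hq]
  | mul_X p j hp =>
    rw [map_mul, perturb_X, mul_add, ← mul_assoc, Polynomial.coeff_add, Polynomial.coeff_mul_C,
      Polynomial.coeff_mul_X, Polynomial.coeff_mul_C, perturb_coeff_zero, hp,
      Derivation.leibniz, mkDerivation_X, smul_eq_mul, smul_eq_mul]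
    ring

end perturb

/-- Polynomials in `t` over `MvPolynomial σ R` that are homogeneous of degree `d` when `t` is
given degree `-n`. -/
def shiftedHomogeneousSubmodule (σ R : Type*) [CommSemiring R] (n d : ℕ) :
    Submodule R (Polynomial (MvPolynomial σ R)) where
  carrier := {P | ∀ k, (P.coeff k).IsHomogeneous (d + n * k)}
  add_mem' hP hQ k := by simpa using (hP k).add (hQ k)
  zero_mem' k := by simpa using isHomogeneous_zero σ R _
  smul_mem' r P hP k := by
    simpa [Polynomial.coeff_smul, smul_eq_C_mul] using (hP k).C_mul r

theorem mem_shiftedHomogeneousSubmodule {n d : ℕ} {P : Polynomial (MvPolynomial σ R)} :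
    P ∈ shiftedHomogeneousSubmodule σ R n d ↔ ∀ k, (P.coeff k).IsHomogeneous (d + n * k) :=
  Iff.rfl

theorem shiftedHomogeneousSubmodule_mul (n a b : ℕ) :
    shiftedHomogeneousSubmodule σ R n a * shiftedHomogeneousSubmodule σ R n b ≤
      shiftedHomogeneousSubmodule σ R n (a + b) := by
  refine Submodule.mul_le.2 fun P hP Q hQ k => ?_
  rw [Polynomial.coeff_mul]
  refine IsHomogeneous.sum _ _ _ fun ij hij => ?_
  rw [Finset.HasAntidiagonal.mem_antidiagonal] at hij
  convert (hP ij.1).mul (hQ ij.2) using 1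
  rw [← hij]
  ring

theorem shiftedHomogeneousSubmodule_one_pow_le (n d : ℕ) :
    shiftedHomogeneousSubmodule σ R n 1 ^ d ≤ shiftedHomogeneousSubmodule σ R n d := by
  induction d with
  | zero =>
    rw [pow_zero, Submodule.one_le]
    intro k
    rw [Polynomial.coeff_one]
    split_ifs with hk
    · simpa [hk] using isHomogeneous_one σ R
    · exact isHomogeneous_zero σ R _
  | succ d ih =>
    grw [pow_succ, ih]
    exact shiftedHomogeneousSubmodule_mul n d 1

section homogeneous

variable {n : ℕ} {g : σ → MvPolynomial σ R}

theorem map_perturb_homogeneousSubmodule_le (hg : ∀ j, (g j).IsHomogeneous (n + 1)) (d : ℕ) :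
    (homogeneousSubmodule σ R d).map (perturb g).toLinearMap ≤
      shiftedHomogeneousSubmodule σ R n d := by
  have hX : (homogeneousSubmodule σ R 1).map (perturb g).toLinearMap ≤
      shiftedHomogeneousSubmodule σ R n 1 := by
    rw [homogeneousSubmodule_one_eq_span_X, Submodule.map_span_le]
    rintro _ ⟨j, rfl⟩ k
    rw [AlgHom.toLinearMap_apply, perturb_X, Polynomial.coeff_add, Polynomial.coeff_C,
      Polynomial.coeff_C_mul_X]
    rcases k with _ | _ | k
    · simpa using isHomogeneous_X R j
    · simpa [add_comm] using hg j
    · simpa using isHomogeneous_zero σ R _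
  calc (homogeneousSubmodule σ R d).map (perturb g).toLinearMap
      _ = (homogeneousSubmodule σ R 1).map (perturb g).toLinearMap ^ d := by
        rw [← Submodule.map_pow, homogeneousSubmodule_one_pow]
      _ ≤ shiftedHomogeneousSubmodule σ R n 1 ^ d := pow_le_pow_left' hX d
      _ ≤ shiftedHomogeneousSubmodule σ R n d := shiftedHomogeneousSubmodule_one_pow_le n d

theorem perturb_coeff_isHomogeneous (hg : ∀ j, (g j).IsHomogeneous (n + 1)) {d : ℕ}
    {f : MvPolynomial σ R} (hf : f.IsHomogeneous d) (k : ℕ) : ((perturb g f).coeff k).IsHomogeneous (d + n * k) :=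
  mem_shiftedHomogeneousSubmodule.1 (map_perturb_homogeneousSubmodule_le hg d
    (Submodule.mem_map_of_mem ((mem_homogeneousSubmodule d f).2 hf))) k

end homogeneous

theorem homogeneousComponent_eval_one {d : ℕ} {P : Polynomial (MvPolynomial σ R)}
    (hP : ∀ k, (P.coeff k).IsHomogeneous (d + k)) (k : ℕ) :
    homogeneousComponent (d + k) (P.eval 1) = P.coeff k := by
  classical
  rw [Polynomial.eval_eq_sum, Polynomial.sum, map_sum]
  simp only [one_pow, mul_one, homogeneousComponent_of_mem (hP _), add_right_inj,
    Finset.sum_ite_eq]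
  split_ifs with hk
  · rfl
  · exact (Polynomial.notMem_support_iff.1 hk).symm

end MvPolynomial

/-- `Sq¹` acts as the Milnor derivation `Q₀`. -/
theorem sq_one_eq_Q_zero (σ : Type*) (d : ℕ) (f : MvPolynomial σ (ZMod 2))
    (hf : f.IsHomogeneous d) :
    MvPolynomial.homogeneousComponent (d + 1) (Sq σ f) = Q σ 0 f := by
  have hsq (j : σ) : (X j ^ 2 : MvPolynomial σ (ZMod 2)).IsHomogeneous (1 + 1) :=
    isHomogeneous_X_pow j 2
  have hcoeff (k : ℕ) : ((perturb (fun j => X j ^ 2) f).coeff k).IsHomogeneous (d + k) := by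
    simpa using perturb_coeff_isHomogeneous hsq hf k
  rw [Sq, ← perturb_eval_one, homogeneousComponent_eval_one hcoeff, perturb_coeff_one]
  rfl
end

section
/- Let σ be a type and let f ∈ MvPolynomial σ (ZMod 2) be homogeneous of degree d. Then MvPolynomial.homogeneousComponent d (Sq f) = f, and MvPolynomial.homogeneousComponent m (Sq f) = 0 for every m with m < d or m > 2 * d. (Equivalently, in the polynomial model Sq⁰ f = f and Sq^k f = 0 for k > d, the unstability condition.) -/
open MvPolynomial

/-!
Since `X j + X j ^ 2 = X j * (1 + X j)`, the square of a monomial factors as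
`Sq (X ^ s) = X ^ s * ∏ j, (1 + X j) ^ (s j)`. The cofactor has constant term `1` and total
degree at most `|s|`, and multiplying by the degree-`|s|` monomial `X ^ s` shifts homogeneous
components up by `|s|`; so `Sq (X ^ s)` lives in degrees `|s|, …, 2|s|` with bottom
component `X ^ s`. A homogeneous `f` is a sum of monomials of the same degree.
-/

open Finset

namespace MvPolynomial

variable {σ R : Type*} [CommSemiring R]

theorem IsHomogeneous.homogeneousComponent_mul_eq_zero_of_lt {p : MvPolynomial σ R} {n m : ℕ}
    (hp : p.IsHomogeneous n) (q : MvPolynomial σ R) (hm : m < n) :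
    homogeneousComponent m (p * q) = 0 := by
  rw [← sum_homogeneousComponent q, mul_sum, map_sum]
  refine sum_eq_zero fun i _ => ?_
  rw [homogeneousComponent_of_mem (hp.mul (homogeneousComponent_isHomogeneous i q)),
    if_neg (by omega)]

theorem IsHomogeneous.homogeneousComponent_add_mul {p : MvPolynomial σ R} {n : ℕ}
    (hp : p.IsHomogeneous n) (q : MvPolynomial σ R) (k : ℕ) :
    homogeneousComponent (n + k) (p * q) = p * homogeneousComponent k q := by
  conv_lhs => rw [← sum_homogeneousComponent q, mul_sum, map_sum]
  simp only [homogeneousComponent_of_mem (hp.mul (homogeneousComponent_isHomogeneous _ q)),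
    Nat.add_left_cancel_iff, sum_ite_eq, mem_range]
  split_ifs with hk
  · rfl
  · rw [homogeneousComponent_eq_zero _ _ (by omega), mul_zero]

theorem totalDegree_prod_one_add_X_pow_le (s : σ →₀ ℕ) :
    (s.prod fun j k => (1 + X j : MvPolynomial σ R) ^ k).totalDegree ≤ s.degree := by
  refine (totalDegree_finsetProd _ _).trans (sum_le_sum fun j _ => ?_)
  refine (totalDegree_pow _ _).trans (mul_le_of_le_one_right (Nat.zero_le _) ?_)
  have hX : (X j : MvPolynomial σ R).totalDegree ≤ 1 := by
    simpa [X] using totalDegree_monomial_le (R := R) (Finsupp.single j 1) 1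
  exact (totalDegree_add _ _).trans (max_le (totalDegree_one.le.trans zero_le_one) hX)

theorem coeff_zero_prod_one_add_X_pow (s : σ →₀ ℕ) :
    coeff 0 (s.prod fun j k => (1 + X j : MvPolynomial σ R) ^ k) = 1 := by
  simp [← constantCoeff_eq, Finsupp.prod]

end MvPolynomial

section

variable {σ : Type*}

theorem Sq_monomial (s : σ →₀ ℕ) (c : ZMod 2) :
    Sq σ (monomial s c) = monomial s c * s.prod fun j k => (1 + X j) ^ k := by
  rw [Sq, aeval_monomial, algebraMap_eq, monomial_eq, mul_assoc, ← Finsupp.prod_mul]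
  refine congrArg _ (Finsupp.prod_congr fun j _ => ?_)
  rw [← mul_pow]
  ring

theorem homogeneousComponent_degree_add_Sq_monomial (s : σ →₀ ℕ) (c : ZMod 2) (k : ℕ) :
    homogeneousComponent (s.degree + k) (Sq σ (monomial s c)) =
      monomial s c * homogeneousComponent k (s.prod fun j k => (1 + X j) ^ k) := by
  rw [Sq_monomial, (isHomogeneous_monomial _ rfl).homogeneousComponent_add_mul]

theorem homogeneousComponent_degree_Sq_monomial (s : σ →₀ ℕ) (c : ZMod 2) :
    homogeneousComponent s.degree (Sq σ (monomial s c)) = monomial s c := by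
  simpa [coeff_zero_prod_one_add_X_pow] using homogeneousComponent_degree_add_Sq_monomial s c 0

theorem homogeneousComponent_Sq_monomial_of_lt (s : σ →₀ ℕ) (c : ZMod 2) {m : ℕ}
    (hm : m < s.degree) : homogeneousComponent m (Sq σ (monomial s c)) = 0 := by
  rw [Sq_monomial, (isHomogeneous_monomial _ rfl).homogeneousComponent_mul_eq_zero_of_lt _ hm]

theorem homogeneousComponent_Sq_monomial_of_two_mul_lt (s : σ →₀ ℕ) (c : ZMod 2) {m : ℕ}
    (hm : 2 * s.degree < m) : homogeneousComponent m (Sq σ (monomial s c)) = 0 := by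
  obtain ⟨k, rfl⟩ := Nat.exists_eq_add_of_le (show s.degree ≤ m by omega)
  rw [homogeneousComponent_degree_add_Sq_monomial, homogeneousComponent_eq_zero, mul_zero]
  exact (totalDegree_prod_one_add_X_pow_le s).trans_lt (by omega)

end

/-- `Sq⁰ f = f`, and the components of `Sq f` outside degrees `[d, 2d]`
vanish. -/
theorem sq_zero_eq_self_and_unstable (σ : Type*) (d : ℕ)
    (f : MvPolynomial σ (ZMod 2)) (hf : f.IsHomogeneous d) :
    MvPolynomial.homogeneousComponent d (Sq σ f) = f ∧
      ∀ m : ℕ, m < d ∨ m > 2 * d →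
        MvPolynomial.homogeneousComponent m (Sq σ f) = 0 := by
  have hdeg : ∀ s ∈ f.support, s.degree = d := fun s hs =>
    (hf.degree_eq_sum_deg_support hs).symm
  have hcomp : ∀ m, homogeneousComponent m (Sq σ f) =
      ∑ s ∈ f.support, homogeneousComponent m (Sq σ (monomial s (coeff s f))) := by
    intro m
    conv_lhs => rw [← support_sum_monomial_coeff f]
    simp only [map_sum]
  refine ⟨?_, fun m hm => ?_⟩
  · rw [hcomp]
    conv_rhs => rw [← support_sum_monomial_coeff f]
    refine sum_congr rfl fun s hs => ?_
    rw [← hdeg s hs, homogeneousComponent_degree_Sq_monomial]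
  · rw [hcomp]
    refine sum_eq_zero fun s hs => ?_
    rcases hm with hm | hm
    · exact homogeneousComponent_Sq_monomial_of_lt _ _ (hdeg s hs ▸ hm)
    · exact homogeneousComponent_Sq_monomial_of_two_mul_lt _ _ (hdeg s hs ▸ hm)
end

section
/- Let σ be a type, i ∈ ℕ, k ≥ 1, and let f ∈ MvPolynomial σ (ZMod 2) be such that every monomial in the support of f has at most k variables occurring with odd exponent. Then every monomial in the support of Q_i f has at most k − 1 variables occurring with odd exponent. (Each Milnor derivation strictly decreases the number of odd exponents; this is the inductive step showing that a product of n Milnor derivations annihilates polynomials in fewer than n variables.) -/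
open MvPolynomial

lemma key_lemma {σ : Type*} (i k : ℕ) (m : σ →₀ ℕ) (j : σ) (s : σ →₀ ℕ)
    (hs : s = m - Finsupp.single j 1 + Finsupp.single j (2 ^ (i + 1)))
    (hj : Odd (m j))
    (hm : (m.support.filter fun l => Odd (m l)).card ≤ k) :
    (s.support.filter fun l => Odd (s l)).card ≤ k - 1 := by
  classical
  have hsj : ¬ Odd (s j) := by
    have h1 : s j = (m j - 1) + 2 ^ (i + 1) := by
      simp [hs, Finsupp.add_apply, Finsupp.tsub_apply]
    have h2 : (2 : ℕ) ∣ 2 ^ (i + 1) := dvd_pow_self 2 (by omega)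
    obtain ⟨r, hr⟩ := hj
    obtain ⟨t, ht⟩ := h2
    rw [h1, Nat.odd_iff]
    omega
  have hne : ∀ l, l ≠ j → s l = m l := by
    intro l hl
    simp [hs, Finsupp.add_apply, Finsupp.tsub_apply, Finsupp.single_apply, hl.symm]
  have hsub : (s.support.filter fun l => Odd (s l)) ⊆
      ((m.support.filter fun l => Odd (m l)).erase j) := by
    intro l hl
    simp only [Finset.mem_filter, Finsupp.mem_support_iff] at hl
    have hlj : l ≠ j := by rintro rfl; exact hsj hl.2
    rw [Finset.mem_erase]
    refine ⟨hlj, Finset.mem_filter.2 ⟨Finsupp.mem_support_iff.2 ?_, ?_⟩⟩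
    · rw [← hne l hlj]; exact hl.1
    · rw [← hne l hlj]; exact hl.2
  have hjmem : j ∈ (m.support.filter fun l => Odd (m l)) := by
    refine Finset.mem_filter.2 ⟨Finsupp.mem_support_iff.2 ?_, hj⟩
    obtain ⟨r, hr⟩ := hj; omega
  calc (s.support.filter fun l => Odd (s l)).card
      ≤ ((m.support.filter fun l => Odd (m l)).erase j).card := Finset.card_le_card hsub
    _ = (m.support.filter fun l => Odd (m l)).card - 1 := Finset.card_erase_of_mem hjmem
    _ ≤ k - 1 := by omega

/-- Each Milnor derivation strictly decreases the number of variables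
occurring with odd exponent in every monomial of the support. -/
theorem milnor_derivation_decreases_odd_exponents (σ : Type*) (i k : ℕ)
    (hk : 1 ≤ k) (f : MvPolynomial σ (ZMod 2))
    (hf : ∀ m ∈ f.support, (m.support.filter fun j => Odd (m j)).card ≤ k) :
    ∀ m ∈ (Q σ i f).support,
      (m.support.filter fun j => Odd (m j)).card ≤ k - 1 := by
  classical
  intro m' hm'
  have h1 : Q σ i f = ∑ m ∈ f.support, Q σ i (monomial m (coeff m f)) := by
    rw [← map_sum]
    congr 1
    exact f.as_sum
  rw [h1] at hm'
  obtain ⟨m, hmf, hm'⟩ := Finset.mem_biUnion.1 (MvPolynomial.support_sum hm')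
  have hQm : Q σ i (monomial m (coeff m f)) =
      (coeff m f) • (Finsupp.sum m fun j n =>
        monomial (m - Finsupp.single j 1) ((n : ZMod 2)) •
          ((X j : MvPolynomial σ (ZMod 2)) ^ (2 ^ (i + 1)))) := by
    show (MvPolynomial.mkDerivation (ZMod 2)
        (fun j => (MvPolynomial.X j : MvPolynomial σ (ZMod 2)) ^ (2 ^ (i + 1))))
        (monomial m (coeff m f)) = _
    exact MvPolynomial.mkDerivation_monomial (R := ZMod 2) (A := MvPolynomial σ (ZMod 2))
      (fun j => (MvPolynomial.X j : MvPolynomial σ (ZMod 2)) ^ (2 ^ (i + 1))) m (coeff m f)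
  rw [hQm] at hm'
  have hm'2 := MvPolynomial.support_smul hm'
  rw [Finsupp.sum] at hm'2
  obtain ⟨j, hjm, hm'3⟩ := Finset.mem_biUnion.1 (MvPolynomial.support_sum hm'2)
  have heq : monomial (m - Finsupp.single j 1) ((m j : ZMod 2)) •
      ((X j : MvPolynomial σ (ZMod 2)) ^ (2 ^ (i + 1))) =
      monomial (m - Finsupp.single j 1 + Finsupp.single j (2 ^ (i + 1)))
        ((m j : ZMod 2)) := by
    rw [smul_eq_mul, X_pow_eq_monomial, monomial_mul, mul_one]
  rw [heq] at hm'3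
  rw [MvPolynomial.mem_support_iff, MvPolynomial.coeff_monomial] at hm'3
  by_cases hcase : m - Finsupp.single j 1 + Finsupp.single j (2 ^ (i + 1)) = m'
  · have hne : (m j : ZMod 2) ≠ 0 := by rwa [if_pos hcase] at hm'3
    have hodd : Odd (m j) := by
      rw [Ne, ZMod.natCast_eq_zero_iff] at hne
      exact Nat.odd_iff.2 (Nat.two_dvd_ne_zero.1 hne)
    exact key_lemma i k m j m' hcase.symm hodd (hf m hmf)
  · rw [if_neg hcase] at hm'3; exact absurd rfl hm'3
end
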